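/- arXiv:2604.26877 — 4 statements merged into one kernel-verified Lean document; each statement's English description precedes it below -/
import Mathlib

section
/- Fix λ, β > 0 with β ∈ (0, 2/3), a velocity value ν₊, ν₋ ∈ ℝ with |ν₊|, |ν₋| ≤ V, and f ∈ Lip(ℝ). Define the Lax–Friedrichs-type update H(u_{-1}, u_0, u_1) = u_0 − λ[F(ν₊, u_0, u_1) − F(ν₋, u_{-1}, u_0)], where F(a, u, v) = (a/2)(f(u) + f(v)) − (β/(2λ))(v − u). If λ ≤ min(1, 4 − 6β, 6β)/(1 + 6 Lip(f) V), then H is nondecreasing in each of u_{-1}, u_0, u_1 on [0,1]³. -/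
/-- Lax–Friedrichs-type numerical flux with frozen nonlocal velocity `a`. -/
noncomputable def LFflux (f : ℝ → ℝ) (β lam : ℝ) (a u v : ℝ) : ℝ :=
  a / 2 * (f u + f v) - β / (2 * lam) * (v - u)

/-- Marching (update) operator of the finite volume scheme with frozen
convolution values `ν₋, ν₊`. -/
noncomputable def LFupdate (f : ℝ → ℝ) (β lam νm νp : ℝ) (um u0 up : ℝ) : ℝ :=
  u0 - lam * (LFflux f β lam νp u0 up - LFflux f β lam νm um u0)

lemma LFupdate_eq (f : ℝ → ℝ) (β lam νm νp : ℝ) (hlam : lam ≠ 0) (um u0 up : ℝ) :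
    LFupdate f β lam νm νp um u0 up =
      (1 - β) * u0 + β / 2 * up + β / 2 * um
        - lam / 2 * (νp * f up) + lam / 2 * (νm * f um)
        - lam / 2 * ((νp - νm) * f u0) := by
  simp only [LFupdate, LFflux]
  field_simp
  ring

/-- Under the CFL condition, the Lax–Friedrichs-type update is nondecreasing in
each of its three arguments on `[0,1]³`. -/
theorem LFupdate_monotone
    (f : ℝ → ℝ) (L β lam V νm νp : ℝ)
    (hf : ∀ a b : ℝ, |f a - f b| ≤ L * |a - b|)
    (hβ : β ∈ Set.Ioo (0:ℝ) (2/3)) (hlam : 0 < lam)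
    (hV : 0 ≤ V) (hνm : |νm| ≤ V) (hνp : |νp| ≤ V)
    (hCFL : lam ≤ min 1 (min (4 - 6 * β) (6 * β)) / (1 + 6 * L * V)) :
    ∀ um u0 up um' u0' up' : ℝ,
      um ∈ Set.Icc (0:ℝ) 1 → u0 ∈ Set.Icc (0:ℝ) 1 → up ∈ Set.Icc (0:ℝ) 1 →
      um' ∈ Set.Icc (0:ℝ) 1 → u0' ∈ Set.Icc (0:ℝ) 1 → up' ∈ Set.Icc (0:ℝ) 1 →
      um ≤ um' → u0 ≤ u0' → up ≤ up' →
      LFupdate f β lam νm νp um u0 up ≤ LFupdate f β lam νm νp um' u0' up' := by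
  intro um u0 up um' u0' up' _ _ _ _ _ _ hm h0 hp
  obtain ⟨hβ0, hβ2⟩ := hβ
  have hL : 0 ≤ L := by
    have h := hf 0 1
    rw [show |(0:ℝ) - 1| = 1 by norm_num, mul_one] at h
    linarith [abs_nonneg (f 0 - f 1)]
  have hden : (0:ℝ) < 1 + 6 * L * V := by nlinarith
  have hmin1 : min 1 (min (4 - 6 * β) (6 * β)) ≤ 1 := min_le_left _ _
  have hminβ : min 1 (min (4 - 6 * β) (6 * β)) ≤ 6 * β :=
    le_trans (min_le_right _ _) (min_le_right _ _)
  have hlam1 : lam * (1 + 6 * L * V) ≤ 1 := by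
    have h := (le_div_iff₀ hden).mp hCFL
    linarith
  have hlamβ : lam * (1 + 6 * L * V) ≤ 6 * β := by
    have h := (le_div_iff₀ hden).mp hCFL
    linarith
  have key1 : lam * (L * V) ≤ β := by nlinarith
  have key2 : lam * (L * V) ≤ 1/6 := by nlinarith
  have lip : ∀ a b : ℝ, a ≤ b → |f b - f a| ≤ L * (b - a) := by
    intro a b hab
    have h := hf b a
    rwa [abs_of_nonneg (by linarith : (0:ℝ) ≤ b - a)] at h
  have bp := abs_le.mp (lip _ _ hp)
  have bm := abs_le.mp (lip _ _ hm)
  have b0 := abs_le.mp (lip _ _ h0)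
  have hνm' := abs_le.mp hνm
  have hνp' := abs_le.mp hνp
  have Bp : |νp * (f up' - f up)| ≤ V * (L * (up' - up)) := by
    rw [abs_mul]; exact mul_le_mul hνp (lip _ _ hp) (abs_nonneg _) hV
  have Bm : |νm * (f um' - f um)| ≤ V * (L * (um' - um)) := by
    rw [abs_mul]; exact mul_le_mul hνm (lip _ _ hm) (abs_nonneg _) hV
  have Bp0 : |νp * (f u0' - f u0)| ≤ V * (L * (u0' - u0)) := by
    rw [abs_mul]; exact mul_le_mul hνp (lip _ _ h0) (abs_nonneg _) hV
  have Bm0 : |νm * (f u0' - f u0)| ≤ V * (L * (u0' - u0)) := by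
    rw [abs_mul]; exact mul_le_mul hνm (lip _ _ h0) (abs_nonneg _) hV
  obtain ⟨Bp1, Bp2⟩ := abs_le.mp Bp
  obtain ⟨Bm1, Bm2⟩ := abs_le.mp Bm
  obtain ⟨Bp01, Bp02⟩ := abs_le.mp Bp0
  obtain ⟨Bm01, Bm02⟩ := abs_le.mp Bm0
  rw [← sub_nonneg]
  have E : LFupdate f β lam νm νp um' u0' up' - LFupdate f β lam νm νp um u0 up =
      (1 - β) * (u0' - u0) + β / 2 * (up' - up) + β / 2 * (um' - um)
        - lam / 2 * (νp * (f up' - f up)) + lam / 2 * (νm * (f um' - f um))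
        - lam / 2 * (νp * (f u0' - f u0)) + lam / 2 * (νm * (f u0' - f u0)) := by
    rw [LFupdate_eq f β lam νm νp hlam.ne' um u0 up,
      LFupdate_eq f β lam νm νp hlam.ne' um' u0' up']
    ring
  rw [E]
  linarith [mul_le_mul_of_nonneg_left Bp2 hlam.le,
    mul_le_mul_of_nonneg_left Bm1 hlam.le,
    mul_le_mul_of_nonneg_left Bp02 hlam.le,
    mul_le_mul_of_nonneg_left Bm01 hlam.le,
    mul_le_mul_of_nonneg_right key2 (sub_nonneg.mpr h0),
    mul_le_mul_of_nonneg_right key1 (sub_nonneg.mpr hp),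
    mul_le_mul_of_nonneg_right key1 (sub_nonneg.mpr hm),
    mul_le_mul_of_nonneg_right hβ2.le (sub_nonneg.mpr h0)]
end

section
/- Let H(u_{-1}, u_0, u_1) = u_0 − λ[F(ν₊, u_0, u_1) − F(ν₋, u_{-1}, u_0)] with F(a, u, v) = (a/2)(f(u) + f(v)) − (β/(2λ))(v − u), where f ∈ Lip(ℝ) satisfies f(0) = 0 = f(1), ν₊, ν₋ ∈ [0, V], β ∈ (0, 2/3), and λ ≤ min(1, 4 − 6β, 6β)/(1 + 6 Lip(f) V). If u_{-1}, u_0, u_1 ∈ [0,1], then H(u_{-1}, u_0, u_1) ∈ [0,1]. -/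
private lemma nu_mul_bounds (ν x c V : ℝ) (h1 : 0 ≤ ν) (h2 : ν ≤ V)
    (h3 : |x| ≤ c) : -(V * c) ≤ ν * x ∧ ν * x ≤ V * c := by
  have h := abs_le.mp h3
  constructor <;> nlinarith [h.1, h.2]

/-- Invariant region principle: if `f(0) = 0 = f(1)` then, under the CFL
condition, the update maps `[0,1]³` into `[0,1]`. -/
theorem LFupdate_invariant_region
    (f : ℝ → ℝ) (L β lam V νm νp : ℝ)
    (hf : ∀ a b : ℝ, |f a - f b| ≤ L * |a - b|)
    (hf0 : f 0 = 0) (hf1 : f 1 = 0)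
    (hβ : β ∈ Set.Ioo (0:ℝ) (2/3)) (hlam : 0 < lam)
    (hV : 0 ≤ V) (hνm : νm ∈ Set.Icc 0 V) (hνp : νp ∈ Set.Icc 0 V)
    (hCFL : lam ≤ min 1 (min (4 - 6 * β) (6 * β)) / (1 + 6 * L * V)) :
    ∀ um u0 up : ℝ,
      um ∈ Set.Icc (0:ℝ) 1 → u0 ∈ Set.Icc (0:ℝ) 1 → up ∈ Set.Icc (0:ℝ) 1 →
      LFupdate f β lam νm νp um u0 up ∈ Set.Icc (0:ℝ) 1 := by
  intro um u0 up hum hu0 hup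
  obtain ⟨hum0, hum1⟩ := hum
  obtain ⟨hu00, hu01⟩ := hu0
  obtain ⟨hup0, hup1⟩ := hup
  obtain ⟨hβ0, hβ1⟩ := hβ
  obtain ⟨hνm0, hνm1⟩ := hνm
  obtain ⟨hνp0, hνp1⟩ := hνp
  -- L ≥ 0
  have hL : 0 ≤ L := by
    have := hf 1 0
    simp [hf0, hf1] at this
    linarith [abs_nonneg (f 1 - f 0), hf 1 0]
  -- CFL consequences
  have hden : (0:ℝ) < 1 + 6 * L * V := by nlinarith
  have hCFL' : lam * (1 + 6 * L * V) ≤ min 1 (min (4 - 6 * β) (6 * β)) := by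
    rw [← le_div_iff₀ hden]; exact hCFL
  have hm1 : lam * (1 + 6 * L * V) ≤ 6 * β :=
    le_trans hCFL' (le_trans (min_le_right _ _) (min_le_right _ _))
  have hm2 : lam * (1 + 6 * L * V) ≤ 4 - 6 * β :=
    le_trans hCFL' (le_trans (min_le_right _ _) (min_le_left _ _))
  have key1 : lam * L * V ≤ β := by nlinarith
  have key2 : lam * L * V ≤ 1 - β := by nlinarith
  -- Lipschitz bounds at 0 and 1
  have hb0 : ∀ x : ℝ, 0 ≤ x → x ≤ 1 → |f x| ≤ L * x := by
    intro x hx hx1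
    have := hf x 0
    rwa [hf0, sub_zero, sub_zero, abs_of_nonneg hx] at this
  have hb1 : ∀ x : ℝ, 0 ≤ x → x ≤ 1 → |f x| ≤ L * (1 - x) := by
    intro x hx hx1
    have h := hf x 1
    rw [hf1, sub_zero] at h
    have hx2 : |x - 1| = 1 - x := by
      rw [abs_of_nonpos (by linarith)]; ring
    rwa [hx2] at h
  have habsm0 : |f um + f u0| ≤ L * (um + u0) := by
    calc |f um + f u0| ≤ |f um| + |f u0| := abs_add_le _ _
      _ ≤ L * (um + u0) := by
          have := hb0 um hum0 hum1; have := hb0 u0 hu00 hu01; linarith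
  have habsp0 : |f u0 + f up| ≤ L * (u0 + up) := by
    calc |f u0 + f up| ≤ |f u0| + |f up| := abs_add_le _ _
      _ ≤ L * (u0 + up) := by
          have := hb0 u0 hu00 hu01; have := hb0 up hup0 hup1; linarith
  have habsm1 : |f um + f u0| ≤ L * ((1 - um) + (1 - u0)) := by
    calc |f um + f u0| ≤ |f um| + |f u0| := abs_add_le _ _
      _ ≤ L * ((1 - um) + (1 - u0)) := by
          have := hb1 um hum0 hum1; have := hb1 u0 hu00 hu01; linarith
  have habsp1 : |f u0 + f up| ≤ L * ((1 - u0) + (1 - up)) := by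
    calc |f u0 + f up| ≤ |f u0| + |f up| := abs_add_le _ _
      _ ≤ L * ((1 - u0) + (1 - up)) := by
          have := hb1 u0 hu00 hu01; have := hb1 up hup0 hup1; linarith
  -- bounds on the velocity-weighted flux sums
  obtain ⟨hP0, _⟩ := nu_mul_bounds νm (f um + f u0) (L * (um + u0)) V hνm0 hνm1 habsm0
  obtain ⟨_, hQ0⟩ := nu_mul_bounds νp (f u0 + f up) (L * (u0 + up)) V hνp0 hνp1 habsp0
  obtain ⟨_, hP1⟩ := nu_mul_bounds νm (f um + f u0) (L * ((1 - um) + (1 - u0))) V hνm0 hνm1 habsm1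
  obtain ⟨hQ1, _⟩ := nu_mul_bounds νp (f u0 + f up) (L * ((1 - u0) + (1 - up))) V hνp0 hνp1 habsp1
  -- algebraic form of the update
  have hH : LFupdate f β lam νm νp um u0 up
      = (1 - β) * u0 + β / 2 * (um + up)
        + lam / 2 * (νm * (f um + f u0) - νp * (f u0 + f up)) := by
    unfold LFupdate LFflux
    field_simp
    ring
  rw [hH]
  set P := νm * (f um + f u0) with hPdef
  set Q := νp * (f u0 + f up) with hQdef
  constructor
  · have e1 : 0 ≤ lam * L * V / 2 * (um + 2 * u0 + up) + lam / 2 * (P - Q) := by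
      linarith [mul_nonneg hlam.le (sub_nonneg.mpr hP0),
        mul_nonneg hlam.le (sub_nonneg.mpr hQ0),
        mul_comm lam (V * (L * (um + u0))), mul_comm lam (V * (L * (u0 + up)))]
    linarith [e1, mul_nonneg (sub_nonneg.mpr key1) hum0,
      mul_nonneg (sub_nonneg.mpr key1) hup0,
      mul_nonneg (sub_nonneg.mpr key2) hu00]
  · have e1 : 0 ≤ lam * L * V / 2 * ((1 - um) + 2 * (1 - u0) + (1 - up))
        - lam / 2 * (P - Q) := by
      linarith [mul_nonneg hlam.le (sub_nonneg.mpr hQ1),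
        mul_nonneg hlam.le (sub_nonneg.mpr hP1)]
    linarith [e1, mul_nonneg (sub_nonneg.mpr key1) (sub_nonneg.mpr hum1),
      mul_nonneg (sub_nonneg.mpr key1) (sub_nonneg.mpr hup1),
      mul_nonneg (sub_nonneg.mpr key2) (sub_nonneg.mpr hu01)]
end

section
/- With the notation of the previous discrete convolution (μ ∈ C²(ℝ) with bounded second derivative, nonnegative temporal weights Γ^m with Δt Σ Γ^m ≤ ‖Γ‖_{L¹}, nonnegative densities with mass ≤ M), the discrete second difference satisfies |c_{i+3/2}^n − 2 c_{i+1/2}^n + c_{i−1/2}^n| ≤ 2 M ‖μ''‖_{L^∞} ‖Γ‖_{L¹} (Δx)² for all i, n. -/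
/-!
Writing `c_{i+1/2}^n = Δx Δt Σ_m Γ^{n-m} Σ_p μ(x_p) U_p^m` with `x_p = (i + 1/2 - p) Δx`, the
second difference in `i` only hits `μ`, turning `μ(x_p)` into
`μ(x_p + Δx) - 2 μ(x_p) + μ(x_p - Δx)`. Two applications of the mean value theorem (to
`y ↦ μ(y + Δx) - μ(y)`, then to `μ'`) bound this by `‖μ''‖_∞ Δx²`. Summing against the
nonnegative densities `U^m` costs the mass `M / Δx`, and the time sum costs `‖Γ‖_{L¹} / Δt`.
-/

open Finset

lemma abs_sub_le_of_abs_deriv_le {f : ℝ → ℝ} {C : ℝ} (hf : Differentiable ℝ f)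
    (hC : ∀ z, |deriv f z| ≤ C) (x y : ℝ) : |f y - f x| ≤ C * |y - x| := by
  simpa only [Real.norm_eq_abs] using convex_univ.norm_image_sub_le_of_norm_deriv_le
    (fun z _ => hf z) (fun z _ => hC z) (Set.mem_univ x) (Set.mem_univ y)

lemma abs_second_diff_le {μ : ℝ → ℝ} {K : ℝ} (hμ : Differentiable ℝ μ)
    (hμ' : Differentiable ℝ (deriv μ)) (hK : ∀ z, |deriv (deriv μ) z| ≤ K) (a h : ℝ) :
    |μ (a + h) - 2 * μ a + μ (a - h)| ≤ K * h ^ 2 := by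
  have hderiv : ∀ y, HasDerivAt (fun y => μ (y + h) - μ y) (deriv μ (y + h) - deriv μ y) y :=
    fun y => ((hμ (y + h)).hasDerivAt.comp_add_const y h).sub (hμ y).hasDerivAt
  have hbound : ∀ y, |deriv (fun y => μ (y + h) - μ y) y| ≤ K * |h| := fun y => by
    simpa [(hderiv y).deriv] using abs_sub_le_of_abs_deriv_le hμ' hK y (y + h)
  calc |μ (a + h) - 2 * μ a + μ (a - h)| = |(μ (a + h) - μ a) - (μ (a - h + h) - μ (a - h))| := by
        rw [sub_add_cancel]; ring_nf
    _ ≤ K * |h| * |a - (a - h)| :=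
        abs_sub_le_of_abs_deriv_le (fun y => (hderiv y).differentiableAt) hbound (a - h) a
    _ = K * h ^ 2 := by rw [sub_sub_cancel, mul_assoc, ← abs_mul, ← sq, abs_sq]

lemma abs_tsum_second_diff_le {ι : Type*} {μ : ℝ → ℝ} {K : ℝ} (hμ : Differentiable ℝ μ)
    (hμ' : Differentiable ℝ (deriv μ)) (hK : ∀ z, |deriv (deriv μ) z| ≤ K)
    {x u : ι → ℝ} (h : ℝ) (hu : ∀ p, 0 ≤ u p) (hu_sum : Summable u)
    (hsum_add : Summable fun p => μ (x p + h) * u p) (hsum : Summable fun p => μ (x p) * u p)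
    (hsum_sub : Summable fun p => μ (x p - h) * u p) :
    |∑' p, μ (x p + h) * u p - 2 * ∑' p, μ (x p) * u p + ∑' p, μ (x p - h) * u p|
      ≤ K * h ^ 2 * ∑' p, u p := by
  have hcomb : ∑' p, μ (x p + h) * u p - 2 * ∑' p, μ (x p) * u p + ∑' p, μ (x p - h) * u p
      = ∑' p, (μ (x p + h) - 2 * μ (x p) + μ (x p - h)) * u p := by
    rw [tsum_congr fun p => (by ring : (μ (x p + h) - 2 * μ (x p) + μ (x p - h)) * u p
        = μ (x p + h) * u p - 2 * (μ (x p) * u p) + μ (x p - h) * u p),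
      (hsum_add.sub (hsum.mul_left 2)).tsum_add hsum_sub,
      hsum_add.tsum_sub (hsum.mul_left 2), tsum_mul_left]
  rw [hcomb, ← Real.norm_eq_abs]
  refine tsum_of_norm_bounded (hu_sum.hasSum.mul_left _) fun p => ?_
  rw [Real.norm_eq_abs, abs_mul, abs_of_nonneg (hu p)]
  exact mul_le_mul_of_nonneg_right (abs_second_diff_le hμ hμ' hK _ _) (hu p)

lemma abs_tsum_grid_second_diff_le {μ : ℝ → ℝ} {K Δx : ℝ} (hμ : ContDiff ℝ 2 μ)
    (hK : ∀ z, |deriv (deriv μ) z| ≤ K) {u : ℤ → ℝ} (hu : ∀ p, 0 ≤ u p) (hu_sum : Summable u)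
    (hμu : ∀ i : ℤ, Summable fun p : ℤ => μ (((i : ℝ) + 1/2 - p) * Δx) * u p) (i : ℤ) :
    |∑' p : ℤ, μ (((i : ℝ) + 3/2 - p) * Δx) * u p
      - 2 * ∑' p : ℤ, μ (((i : ℝ) + 1/2 - p) * Δx) * u p
      + ∑' p : ℤ, μ (((i : ℝ) - 1/2 - p) * Δx) * u p| ≤ K * Δx ^ 2 * ∑' p, u p := by
  have hshift_succ : ∀ p : ℤ, ((i : ℝ) + 3/2 - p) * Δx = ((i : ℝ) + 1/2 - p) * Δx + Δx :=
    fun p => by ring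
  have hshift_pred : ∀ p : ℤ, ((i : ℝ) - 1/2 - p) * Δx = ((i : ℝ) + 1/2 - p) * Δx - Δx :=
    fun p => by ring
  simp only [hshift_succ, hshift_pred]
  exact abs_tsum_second_diff_le (hμ.differentiable (by norm_num))
    ((hμ.iterate_deriv' 1 1).differentiable (by norm_num)) hK Δx hu hu_sum
    ((hμu (i + 1)).congr fun p => by push_cast; ring_nf) (hμu i)
    ((hμu (i - 1)).congr fun p => by push_cast; ring_nf)

lemma abs_mul_sum_range_reflect_le {Γ a : ℕ → ℝ} {Δt KΓ B : ℝ} (n : ℕ) (hΔt : 0 ≤ Δt)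
    (hΓ : ∀ m, 0 ≤ Γ m) (hKΓ : Δt * ∑ m ∈ range (n + 1), Γ m ≤ KΓ) (ha : ∀ m, |a m| ≤ B) :
    |Δt * ∑ m ∈ range (n + 1), Γ (n - m) * a m| ≤ KΓ * B := by
  have hB : 0 ≤ B := (abs_nonneg _).trans (ha 0)
  have hreflect : ∑ m ∈ range (n + 1), Γ (n - m) = ∑ m ∈ range (n + 1), Γ m := by
    simpa using sum_range_reflect Γ (n + 1)
  calc |Δt * ∑ m ∈ range (n + 1), Γ (n - m) * a m|
      ≤ Δt * ∑ m ∈ range (n + 1), Γ (n - m) * B := by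
        rw [abs_mul, abs_of_nonneg hΔt]
        refine mul_le_mul_of_nonneg_left ((abs_sum_le_sum_abs _ _).trans
          (sum_le_sum fun m _ => ?_)) hΔt
        rw [abs_mul, abs_of_nonneg (hΓ _)]
        exact mul_le_mul_of_nonneg_left (ha m) (hΓ _)
    _ = (Δt * ∑ m ∈ range (n + 1), Γ m) * B := by rw [← sum_mul, hreflect, mul_assoc]
    _ ≤ KΓ * B := mul_le_mul_of_nonneg_right hKΓ hB

/-- Second-difference estimate on the discrete space-time convolution, with a
constant depending only on the `L¹` norm of the temporal kernel. -/
theorem discrete_convolution_second_difference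
    (Δx Δt M Kμ KΓ : ℝ) (μ : ℝ → ℝ) (Γ : ℕ → ℝ) (U : ℤ → ℕ → ℝ)
    (hΔx : 0 < Δx) (hΔt : 0 < Δt)
    (hμ : ContDiff ℝ 2 μ) (hKμ : ∀ z, |deriv (deriv μ) z| ≤ Kμ)
    (hΓnn : ∀ m, 0 ≤ Γ m)
    (hKΓ : ∀ s : Finset ℕ, Δt * ∑ m ∈ s, Γ m ≤ KΓ)
    (hUnn : ∀ p m, 0 ≤ U p m)
    (hUsum : ∀ m, Summable fun p : ℤ => U p m)
    (hμUsum : ∀ (i : ℤ) (m : ℕ),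
      Summable fun p : ℤ => μ (((i : ℝ) + 1/2 - (p : ℝ)) * Δx) * U p m)
    (hM : ∀ m, Δx * ∑' p : ℤ, U p m ≤ M) :
    ∀ (i : ℤ) (n : ℕ),
      |(Δx * Δt * ∑ m ∈ range (n + 1), Γ (n - m) *
            ∑' p : ℤ, μ (((i : ℝ) + 3/2 - (p : ℝ)) * Δx) * U p m) -
        2 * (Δx * Δt * ∑ m ∈ range (n + 1), Γ (n - m) *
            ∑' p : ℤ, μ (((i : ℝ) + 1/2 - (p : ℝ)) * Δx) * U p m) +
        (Δx * Δt * ∑ m ∈ range (n + 1), Γ (n - m) *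
            ∑' p : ℤ, μ (((i : ℝ) - 1/2 - (p : ℝ)) * Δx) * U p m)|
        ≤ 2 * M * Kμ * KΓ * Δx ^ 2 := by
  intro i n
  have hKμ0 : 0 ≤ Kμ := (abs_nonneg _).trans (hKμ 0)
  have hM0 : 0 ≤ M := (mul_nonneg hΔx.le (tsum_nonneg fun p => hUnn p 0)).trans (hM 0)
  have hKΓ0 : 0 ≤ KΓ := by simpa using hKΓ ∅
  have hspace : ∀ m, |∑' p : ℤ, μ (((i : ℝ) + 3/2 - p) * Δx) * U p m
      - 2 * ∑' p : ℤ, μ (((i : ℝ) + 1/2 - p) * Δx) * U p m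
      + ∑' p : ℤ, μ (((i : ℝ) - 1/2 - p) * Δx) * U p m| ≤ Kμ * Δx * M := fun m =>
    calc _ ≤ Kμ * Δx ^ 2 * ∑' p, U p m :=
          abs_tsum_grid_second_diff_le hμ hKμ (hUnn · m) (hUsum m) (hμUsum · m) i
      _ = Kμ * Δx * (Δx * ∑' p, U p m) := by ring
      _ ≤ Kμ * Δx * M := mul_le_mul_of_nonneg_left (hM m) (mul_nonneg hKμ0 hΔx.le)
  have htime := abs_mul_sum_range_reflect_le n hΔt.le hΓnn (hKΓ _) hspace
  calc _ = Δx * |Δt * ∑ m ∈ range (n + 1), Γ (n - m) *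
          (∑' p : ℤ, μ (((i : ℝ) + 3/2 - p) * Δx) * U p m
            - 2 * ∑' p : ℤ, μ (((i : ℝ) + 1/2 - p) * Δx) * U p m
            + ∑' p : ℤ, μ (((i : ℝ) - 1/2 - p) * Δx) * U p m)| := by
        rw [← abs_of_pos hΔx, ← abs_mul, abs_of_pos hΔx]
        simp only [mul_add, mul_sub, sum_add_distrib, sum_sub_distrib, mul_sum]
        ring_nf
    _ ≤ Δx * (KΓ * (Kμ * Δx * M)) := mul_le_mul_of_nonneg_left htime hΔx.le
    _ ≤ 2 * M * Kμ * KΓ * Δx ^ 2 := by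
        nlinarith [mul_nonneg (mul_nonneg (mul_nonneg hM0 hKμ0) hKΓ0) (sq_nonneg Δx)]
end

section
/- Let u : [0,T] × ℝ → [0,∞) satisfy ‖u(t₁,·) − u(t₂,·)‖_{L¹(ℝ)} ≤ L|t₁ − t₂| and ‖u(t,·)‖_{L¹(ℝ)} ≤ M for all t, and let μ ∈ L¹(ℝ) with μ ≥ 0, Γ_δ ≥ 0 supported in [0,δ] with ∫₀^δ Γ_δ = 1. Then ∫₀^T ∫_ℝ |∫₀^t ∫_ℝ u(τ,ξ) μ(x−ξ) Γ_δ(t−τ) dξ dτ − ∫_ℝ u(t,ξ) μ(x−ξ) dξ| dx dt ≤ (2M + LT) ‖μ‖_{L¹} δ. -/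
open MeasureTheory Set Filter Function Topology
open scoped ENNReal

/-!
For `t ≥ δ` the weight `τ ↦ Γδ (t - τ)` is a probability density on `(0, t]` carried by
`[t - δ, t]`, so by Minkowski's integral inequality the memory term differs in `L¹` from
`u t ⋆ μ` by at most `sup ‖(u τ - u t) ⋆ μ‖₁ ≤ L δ ‖μ‖₁`. For `t < δ` both terms have `L¹` norm
at most `M ‖μ‖₁`. Integrating over `t ∈ [0, T]` gives `(2M + LT) ‖μ‖₁ δ`.

The memory term only makes sense (and Fubini only applies) for a jointly measurable version of
`u`, which is given slice by slice. The `L¹`-Lipschitz bound provides one: the values of `u` on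
the dyadic time grids converge almost everywhere in every slice, at a summable rate.
-/

theorem ae_tendsto_of_summable_integral_norm_sub {X E : Type*} [MeasurableSpace X] {ν : Measure X}
    [NormedAddCommGroup E] {f : ℕ → X → E} {g : X → E}
    (hf : ∀ n, Integrable (fun x => f n x - g x) ν)
    (hs : Summable fun n => ∫ x, ‖f n x - g x‖ ∂ν) :
    ∀ᵐ x ∂ν, Tendsto (fun n => f n x) atTop (𝓝 (g x)) := by
  have hmeas : ∀ n, AEMeasurable (fun x => ‖f n x - g x‖ₑ) ν :=
    fun n => (hf n).aestronglyMeasurable.enorm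
  have hfin : ∫⁻ x, ∑' n, ‖f n x - g x‖ₑ ∂ν ≠ ∞ := by
    rw [lintegral_tsum hmeas]
    simp_rw [← ofReal_integral_norm_eq_lintegral_enorm (hf _)]
    rw [← ENNReal.ofReal_tsum_of_nonneg (fun n => integral_nonneg fun _ => norm_nonneg _) hs]
    exact ENNReal.ofReal_ne_top
  filter_upwards [ae_lt_top' (AEMeasurable.tsum hmeas) hfin] with x hx
  rw [tendsto_iff_norm_sub_tendsto_zero]
  simpa [Function.comp_def] using (ENNReal.tendsto_toReal ENNReal.zero_ne_top).comp
    (ENNReal.tendsto_atTop_zero_of_tsum_ne_top hx.ne)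

theorem floor_mul_div_mem_Icc {t c : ℝ} (ht : 0 ≤ t) (hc : 0 < c) :
    (⌊t * c⌋ : ℝ) / c ∈ Icc 0 t :=
  ⟨div_nonneg (Int.cast_nonneg (Int.floor_nonneg.2 (mul_nonneg ht hc.le))) hc.le,
    (div_le_iff₀ hc).2 (Int.floor_le _)⟩

theorem abs_floor_mul_div_sub_le {c : ℝ} (hc : 0 < c) (t : ℝ) :
    |(⌊t * c⌋ : ℝ) / c - t| ≤ c⁻¹ := by
  rw [abs_sub_comm, abs_of_nonneg (sub_nonneg.2 ((div_le_iff₀ hc).2 (Int.floor_le _))),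
    sub_le_comm, le_div_iff₀ hc, sub_mul, inv_mul_cancel₀ hc.ne']
  exact (Int.sub_one_lt_floor _).le

theorem exists_stronglyMeasurable_uncurry_ae_eq_of_integral_abs_sub_le
    {X : Type*} [MeasurableSpace X] {ν : Measure X} {u : ℝ → X → ℝ} {T L : ℝ}
    (hu : ∀ t, Integrable (u t) ν)
    (hLip : ∀ t₁ ∈ Icc 0 T, ∀ t₂ ∈ Icc 0 T, ∫ x, |u t₁ x - u t₂ x| ∂ν ≤ L * |t₁ - t₂|) :
    ∃ v : ℝ → X → ℝ, StronglyMeasurable (uncurry v) ∧ ∀ t ∈ Icc 0 T, v t =ᵐ[ν] u t := by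
  set w : ℝ → X → ℝ := fun r => (hu r).1.mk (u r)
  set grid : ℕ → ℝ → ℝ := fun n t => ⌊t * 2 ^ n⌋ / 2 ^ n
  -- `grid n` takes countably many values, which makes each approximation jointly measurable.
  have hU : ∀ n, StronglyMeasurable fun p : ℝ × X => w (grid n p.1) p.2 := by
    intro n
    have hw : Measurable fun q : X × ℤ => w (q.2 / 2 ^ n) q.1 :=
      measurable_from_prod_countable_left fun k : ℤ =>
        (hu ((k : ℝ) / 2 ^ n)).1.stronglyMeasurable_mk.measurable
    exact (hw.comp (measurable_snd.prodMk (measurable_fst.mul_const _).floor)).stronglyMeasurable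
  refine ⟨fun t x => limUnder atTop fun n => w (grid n t) x,
    StronglyMeasurable.limUnder (l := atTop) hU, fun t ht => ?_⟩
  have hconv : ∀ᵐ x ∂ν, Tendsto (fun n => u (grid n t) x) atTop (𝓝 (u t x)) := by
    refine ae_tendsto_of_summable_integral_norm_sub (fun n => (hu _).sub (hu t)) ?_
    refine .of_nonneg_of_le (fun n => integral_nonneg fun _ => norm_nonneg _) (fun n => ?_)
      ((summable_geometric_of_lt_one (by norm_num) (by norm_num : (2:ℝ)⁻¹ < 1)).mul_left |L|)
    have h2n : (0 : ℝ) < 2 ^ n := by positivity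
    have hmem : grid n t ∈ Icc 0 T :=
      Icc_subset_Icc_right ht.2 (floor_mul_div_mem_Icc ht.1 h2n)
    calc ∫ x, ‖u (grid n t) x - u t x‖ ∂ν ≤ L * |grid n t - t| := by
          simpa only [Real.norm_eq_abs] using hLip _ hmem t ht
      _ ≤ |L| * 2⁻¹ ^ n := by
          rw [inv_pow]
          exact mul_le_mul (le_abs_self L) (abs_floor_mul_div_sub_le h2n t) (abs_nonneg _)
            (abs_nonneg L)
  filter_upwards [hconv, ae_all_iff.2 fun n => (hu (grid n t)).1.ae_eq_mk] with x hx hw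
  exact (hx.congr hw).limUnder_eq

section Convolution

variable {G : Type*} [AddGroup G] [MeasurableSpace G] [MeasurableAdd₂ G] [MeasurableNeg G]
  {ν : Measure G} [SFinite ν] [ν.IsAddRightInvariant] {f g : G → ℝ}

theorem integrable_integral_mul_comp_sub (hf : Integrable f ν) (hg : Integrable g ν) :
    Integrable (fun x => ∫ ξ, f ξ * g (x - ξ) ∂ν) ν :=
  hf.integrable_convolution (ContinuousLinearMap.mul ℝ ℝ) hg

theorem integral_abs_integral_mul_comp_sub_le (hf : Integrable f ν) (hg : Integrable g ν) :
    ∫ x, |∫ ξ, f ξ * g (x - ξ) ∂ν| ∂ν ≤ (∫ x, |f x| ∂ν) * ∫ x, |g x| ∂ν := by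
  calc ∫ x, |∫ ξ, f ξ * g (x - ξ) ∂ν| ∂ν ≤ ∫ x, ∫ ξ, |f ξ| * |g (x - ξ)| ∂ν ∂ν := by
        refine integral_mono_of_nonneg (ae_of_all _ fun _ => abs_nonneg _)
          (integrable_integral_mul_comp_sub hf.abs hg.abs) (ae_of_all _ fun x => ?_)
        simpa only [abs_mul] using abs_integral_le_integral_abs (f := fun ξ => f ξ * g (x - ξ))
    _ = (∫ x, |f x| ∂ν) * ∫ x, |g x| ∂ν :=
        integral_convolution (ContinuousLinearMap.mul ℝ ℝ) hf.abs hg.abs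

theorem integral_abs_sub_integral_mul_comp_sub_le {f₁ f₂ : G → ℝ} (hf₁ : Integrable f₁ ν)
    (hf₂ : Integrable f₂ ν) (hg : Integrable g ν) :
    ∫ x, |∫ ξ, f₁ ξ * g (x - ξ) ∂ν - ∫ ξ, f₂ ξ * g (x - ξ) ∂ν| ∂ν ≤
      (∫ x, |f₁ x - f₂ x| ∂ν) * ∫ x, |g x| ∂ν := by
  refine le_of_eq_of_le (integral_congr_ae ?_)
    (integral_abs_integral_mul_comp_sub_le (hf₁.sub hf₂) hg)
  filter_upwards [hf₁.ae_convolution_exists (ContinuousLinearMap.mul ℝ ℝ) hg,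
    hf₂.ae_convolution_exists (ContinuousLinearMap.mul ℝ ℝ) hg] with x h₁ h₂
  simp only [sub_mul]
  exact congrArg _ (integral_sub h₁ h₂).symm

end Convolution

theorem aestronglyMeasurable_integral_mul_comp_sub {S G : Type*} [MeasurableSpace S]
    {σ : Measure S} [AddGroup G] [MeasurableSpace G] [MeasurableAdd₂ G] [MeasurableNeg G]
    {ν : Measure G} [SFinite ν] [ν.IsAddLeftInvariant] [ν.IsNegInvariant]
    {u v : S → G → ℝ} {g : G → ℝ}
    (hv : StronglyMeasurable (uncurry v)) (huv : ∀ᵐ s ∂σ, v s =ᵐ[ν] u s)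
    (hg : AEStronglyMeasurable g ν) :
    AEStronglyMeasurable (fun p : S × G => ∫ ξ, u p.1 ξ * g (p.2 - ξ) ∂ν) (σ.prod ν) := by
  have hker : StronglyMeasurable fun q : (S × G) × G => v q.1.1 q.2 * hg.mk g (q.1.2 - q.2) :=
    (hv.comp_measurable (measurable_fst.fst.prodMk measurable_snd)).mul
      (hg.stronglyMeasurable_mk.comp_measurable (measurable_fst.snd.sub measurable_snd))
  refine (hker.integral_prod_right' (ν := ν)).aestronglyMeasurable.congr ?_
  filter_upwards [(Measure.quasiMeasurePreserving_fst (μ := σ) (ν := ν)).ae huv] with p hp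
  refine integral_congr_ae ?_
  filter_upwards [hp, (Measure.measurePreserving_sub_left ν p.2).quasiMeasurePreserving.ae_eq_comp
    hg.ae_eq_mk] with ξ h₁ h₂
  rw [h₁]
  exact congrArg _ h₂.symm

section Minkowski

variable {S X : Type*} [MeasurableSpace S] [MeasurableSpace X] {σ : Measure S} {ν : Measure X}
  [SFinite ν] {F : S → X → ℝ} {k : S → ℝ} {C : ℝ}

theorem integrable_prod_mul_of_integral_abs_le (hF : AEStronglyMeasurable (uncurry F) (σ.prod ν))
    (hk : Integrable k σ) (hFC : ∀ᵐ s ∂σ, Integrable (F s) ν ∧ ∫ x, |F s x| ∂ν ≤ C) :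
    Integrable (fun p : S × X => F p.1 p.2 * k p.1) (σ.prod ν) := by
  have hmeas : AEStronglyMeasurable (fun p : S × X => F p.1 p.2 * k p.1) (σ.prod ν) :=
    hF.mul hk.1.comp_fst
  refine (integrable_prod_iff hmeas).2 ⟨?_, (hk.norm.const_mul C).mono'
    hmeas.norm.integral_prod_right' ?_⟩
  · filter_upwards [hFC] with s hs
    exact hs.1.mul_const _
  · filter_upwards [hFC] with s hs
    simp only [norm_mul, Real.norm_eq_abs, integral_mul_const, abs_abs]
    rw [abs_of_nonneg (integral_nonneg fun _ => abs_nonneg _)]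
    exact mul_le_mul_of_nonneg_right hs.2 (abs_nonneg _)

theorem integral_abs_integral_mul_le [SFinite σ]
    (hFk : Integrable (fun p : S × X => F p.1 p.2 * k p.1) (σ.prod ν))
    (hk : Integrable k σ) (hk0 : ∀ s, 0 ≤ k s)
    (hFC : ∀ᵐ s ∂σ, k s ≠ 0 → ∫ x, |F s x| ∂ν ≤ C) :
    ∫ x, |∫ s, F s x * k s ∂σ| ∂ν ≤ C * ∫ s, k s ∂σ := by
  calc ∫ x, |∫ s, F s x * k s ∂σ| ∂ν ≤ ∫ x, ∫ s, |F s x * k s| ∂σ ∂ν :=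
        integral_mono_of_nonneg (ae_of_all _ fun _ => abs_nonneg _)
          hFk.abs.integral_prod_right (ae_of_all _ fun _ => abs_integral_le_integral_abs)
    _ = ∫ s, ∫ x, |F s x * k s| ∂ν ∂σ := (integral_integral_swap hFk.abs).symm
    _ ≤ ∫ s, C * k s ∂σ := by
        refine integral_mono_ae hFk.abs.integral_prod_left (hk.const_mul C) ?_
        filter_upwards [hFC] with s hs
        simp only [abs_mul, abs_of_nonneg (hk0 s), integral_mul_const]
        by_cases hks : k s = 0
        · simp [hks]
        · exact mul_le_mul_of_nonneg_right (hs hks) (hk0 s)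
    _ = C * ∫ s, k s ∂σ := integral_const_mul C k

theorem integral_abs_integral_mul_sub_le [SFinite σ] {g : X → ℝ}
    (hFk : Integrable (fun p : S × X => F p.1 p.2 * k p.1) (σ.prod ν))
    (hk : Integrable k σ) (hk0 : ∀ s, 0 ≤ k s) (hk1 : ∫ s, k s ∂σ = 1) (hg : Integrable g ν)
    (hFC : ∀ᵐ s ∂σ, k s ≠ 0 → ∫ x, |F s x - g x| ∂ν ≤ C) :
    ∫ x, |∫ s, F s x * k s ∂σ - g x| ∂ν ≤ C := by
  have hFgk : Integrable (fun p : S × X => (F p.1 p.2 - g p.2) * k p.1) (σ.prod ν) :=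
    (hFk.sub (hk.mul_prod hg)).congr (ae_of_all _ fun p => by simp only [Pi.sub_apply]; ring)
  have hmean : ∀ᵐ x ∂ν, ∫ s, F s x * k s ∂σ - g x = ∫ s, (F s x - g x) * k s ∂σ := by
    filter_upwards [hFk.prod_left_ae] with x hx
    simp only [sub_mul]
    rw [integral_sub hx (hk.const_mul (g x)), integral_const_mul, hk1, mul_one]
  rw [integral_congr_ae (hmean.mono fun x hx => congrArg abs hx)]
  simpa [hk1] using integral_abs_integral_mul_le hFgk hk hk0 hFC

end Minkowski

theorem setIntegral_Ioc_comp_sub_left {E : Type*} [NormedAddCommGroup E] [NormedSpace ℝ E]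
    (f : ℝ → E) {t : ℝ} (ht : 0 ≤ t) :
    ∫ τ in Ioc 0 t, f (t - τ) = ∫ τ in Ioc 0 t, f τ := by
  rw [← intervalIntegral.integral_of_le ht, ← intervalIntegral.integral_of_le ht,
    intervalIntegral.integral_comp_sub_left, sub_self, sub_zero]

structure IsMemoryKernel (Γ : ℝ → ℝ) (δ : ℝ) : Prop where
  nonneg : ∀ t, 0 ≤ Γ t
  eq_zero_of_notMem : ∀ t ∉ Icc 0 δ, Γ t = 0
  integrableOn : IntegrableOn Γ (Icc 0 δ)
  setIntegral_Icc : ∫ t in Icc 0 δ, Γ t = 1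

namespace IsMemoryKernel

variable {Γ : ℝ → ℝ} {δ t : ℝ}

theorem mem_Icc_of_ne_zero (hΓ : IsMemoryKernel Γ δ) (h : Γ t ≠ 0) : t ∈ Icc 0 δ :=
  not_not.1 fun ht => h (hΓ.eq_zero_of_notMem t ht)

theorem integrable (hΓ : IsMemoryKernel Γ δ) : Integrable Γ :=
  (integrableOn_iff_integrable_of_support_subset fun _ => hΓ.mem_Icc_of_ne_zero).1 hΓ.integrableOn

theorem integral_eq_one (hΓ : IsMemoryKernel Γ δ) : ∫ t, Γ t = 1 := by
  rw [← setIntegral_eq_integral_of_forall_compl_eq_zero hΓ.eq_zero_of_notMem, hΓ.setIntegral_Icc]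

theorem setIntegral_Ioc_comp_sub_le_one (hΓ : IsMemoryKernel Γ δ) (ht : 0 ≤ t) :
    ∫ τ in Ioc 0 t, Γ (t - τ) ≤ 1 := by
  rw [setIntegral_Ioc_comp_sub_left Γ ht, ← hΓ.integral_eq_one]
  exact setIntegral_le_integral hΓ.integrable (ae_of_all _ hΓ.nonneg)

theorem setIntegral_Ioc_comp_sub_eq_one (hΓ : IsMemoryKernel Γ δ) (ht : 0 ≤ t) (hδt : δ ≤ t) :
    ∫ τ in Ioc 0 t, Γ (t - τ) = 1 := by
  rw [setIntegral_Ioc_comp_sub_left Γ ht, ← integral_Icc_eq_integral_Ioc, ← hΓ.integral_eq_one]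
  exact setIntegral_eq_integral_of_forall_compl_eq_zero fun s hs =>
    hΓ.eq_zero_of_notMem s fun hs' => hs ⟨hs'.1, hs'.2.trans hδt⟩

end IsMemoryKernel

section MemoryTerm

variable {X : Type*} [MeasurableSpace X] {ν : Measure X} [SFinite ν] {f : ℝ → X → ℝ}
  {Γ : ℝ → ℝ} {T δ A t : ℝ}

theorem integrable_memory_integrand
    (hf : AEStronglyMeasurable (uncurry f) ((volume.restrict (Icc 0 T)).prod ν))
    (hf_int : ∀ τ ∈ Icc 0 T, Integrable (f τ) ν) (hf_bdd : ∀ τ ∈ Icc 0 T, ∫ x, |f τ x| ∂ν ≤ A)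
    (hΓ : IsMemoryKernel Γ δ) (ht : t ∈ Icc 0 T) :
    Integrable (fun p : ℝ × X => f p.1 p.2 * Γ (t - p.1)) ((volume.restrict (Ioc 0 t)).prod ν) := by
  have hsub : Ioc 0 t ⊆ Icc 0 T := Ioc_subset_Icc_self.trans (Icc_subset_Icc_right ht.2)
  refine integrable_prod_mul_of_integral_abs_le (C := A)
    (hf.mono_measure (Measure.prod_mono (Measure.restrict_mono hsub le_rfl) le_rfl))
    (hΓ.integrable.comp_sub_left t).integrableOn ?_
  filter_upwards [ae_restrict_mem measurableSet_Ioc] with τ hτ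
  exact ⟨hf_int τ (hsub hτ), hf_bdd τ (hsub hτ)⟩

theorem integral_abs_memory_sub_le_two_mul
    (hf : AEStronglyMeasurable (uncurry f) ((volume.restrict (Icc 0 T)).prod ν))
    (hf_int : ∀ τ ∈ Icc 0 T, Integrable (f τ) ν) (hf_bdd : ∀ τ ∈ Icc 0 T, ∫ x, |f τ x| ∂ν ≤ A)
    (hΓ : IsMemoryKernel Γ δ) (ht : t ∈ Icc 0 T) :
    ∫ x, |(∫ τ in Ioc 0 t, f τ x * Γ (t - τ)) - f t x| ∂ν ≤ 2 * A := by
  have hsub : Ioc 0 t ⊆ Icc 0 T := Ioc_subset_Icc_self.trans (Icc_subset_Icc_right ht.2)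
  have hint := integrable_memory_integrand hf hf_int hf_bdd hΓ ht
  have hA : 0 ≤ A := (integral_nonneg fun _ => abs_nonneg _).trans (hf_bdd t ht)
  have hmemory : ∫ x, |∫ τ in Ioc 0 t, f τ x * Γ (t - τ)| ∂ν ≤ A := by
    refine (integral_abs_integral_mul_le hint (hΓ.integrable.comp_sub_left t).integrableOn
      (fun _ => hΓ.nonneg _) ?_).trans (mul_le_of_le_one_right hA
      (hΓ.setIntegral_Ioc_comp_sub_le_one ht.1))
    filter_upwards [ae_restrict_mem measurableSet_Ioc] with τ hτ _
    exact hf_bdd τ (hsub hτ)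
  calc ∫ x, |(∫ τ in Ioc 0 t, f τ x * Γ (t - τ)) - f t x| ∂ν
      ≤ ∫ x, (|∫ τ in Ioc 0 t, f τ x * Γ (t - τ)| + |f t x|) ∂ν :=
        integral_mono_of_nonneg (ae_of_all _ fun _ => abs_nonneg _)
          (hint.integral_prod_right.abs.add (hf_int t ht).abs)
          (ae_of_all _ fun x => abs_sub (∫ τ in Ioc 0 t, f τ x * Γ (t - τ)) (f t x))
    _ ≤ A + A := by
        rw [integral_add hint.integral_prod_right.abs (hf_int t ht).abs]
        exact add_le_add hmemory (hf_bdd t ht)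
    _ = 2 * A := by ring

theorem integral_abs_memory_sub_le_mul_of_le {B : ℝ}
    (hf : AEStronglyMeasurable (uncurry f) ((volume.restrict (Icc 0 T)).prod ν))
    (hf_int : ∀ τ ∈ Icc 0 T, Integrable (f τ) ν) (hf_bdd : ∀ τ ∈ Icc 0 T, ∫ x, |f τ x| ∂ν ≤ A)
    (hf_lip : ∀ τ ∈ Icc 0 T, ∀ s ∈ Icc 0 T, ∫ x, |f τ x - f s x| ∂ν ≤ B * |τ - s|)
    (hB : 0 ≤ B) (hΓ : IsMemoryKernel Γ δ) (ht : t ∈ Icc 0 T) (hδt : δ ≤ t) :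
    ∫ x, |(∫ τ in Ioc 0 t, f τ x * Γ (t - τ)) - f t x| ∂ν ≤ B * δ := by
  have hsub : Ioc 0 t ⊆ Icc 0 T := Ioc_subset_Icc_self.trans (Icc_subset_Icc_right ht.2)
  refine integral_abs_integral_mul_sub_le (integrable_memory_integrand hf hf_int hf_bdd hΓ ht)
    (hΓ.integrable.comp_sub_left t).integrableOn (fun _ => hΓ.nonneg _)
    (hΓ.setIntegral_Ioc_comp_sub_eq_one ht.1 hδt) (hf_int t ht) ?_
  filter_upwards [ae_restrict_mem measurableSet_Ioc] with τ hτ hΓτ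
  have hlag := hΓ.mem_Icc_of_ne_zero hΓτ
  calc ∫ x, |f τ x - f t x| ∂ν ≤ B * |τ - t| := hf_lip τ (hsub hτ) t ht
    _ ≤ B * δ := by
        rw [abs_sub_comm, abs_of_nonneg hlag.1]
        exact mul_le_mul_of_nonneg_left hlag.2 hB

end MemoryTerm

theorem setIntegral_Icc_le_of_le_of_le {E : ℝ → ℝ} {T δ a b : ℝ} (hT : 0 ≤ T) (hδ : 0 ≤ δ)
    (hb : 0 ≤ b) (hE0 : ∀ t ∈ Icc 0 T, 0 ≤ E t) (hEa : ∀ t ∈ Icc 0 T, E t ≤ a)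
    (hEb : ∀ t ∈ Icc 0 T, δ ≤ t → E t ≤ b) :
    ∫ t in Icc 0 T, E t ≤ a * δ + b * T := by
  have ha : 0 ≤ a := (hE0 0 ⟨le_rfl, hT⟩).trans (hEa 0 ⟨le_rfl, hT⟩)
  have hind : Integrable ((Iio δ).indicator fun _ => a) (volume.restrict (Icc 0 T)) :=
    (integrable_const a).indicator measurableSet_Iio
  calc ∫ t in Icc 0 T, E t ≤ ∫ t in Icc 0 T, ((Iio δ).indicator (fun _ => a) t + b) := by
        refine integral_mono_of_nonneg ((ae_restrict_iff' measurableSet_Icc).2 (ae_of_all _ hE0))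
          (hind.add (integrable_const b)) ((ae_restrict_iff' measurableSet_Icc).2 (ae_of_all _ ?_))
        intro t ht
        show E t ≤ (Iio δ).indicator (fun _ => a) t + b
        by_cases hδt : t ∈ Iio δ
        · rw [indicator_of_mem hδt]
          linarith [hEa t ht]
        · rw [indicator_of_notMem hδt, zero_add]
          exact hEb t ht (not_lt.1 hδt)
    _ = a * volume.real (Iio δ ∩ Icc 0 T) + b * T := by
        rw [integral_add hind (integrable_const b), integral_indicator_const _ measurableSet_Iio,
          setIntegral_const, measureReal_restrict_apply measurableSet_Iio,
          Real.volume_real_Icc_of_le hT]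
        simp only [smul_eq_mul, sub_zero]
        ring
    _ ≤ a * δ + b * T := by
        gcongr
        calc volume.real (Iio δ ∩ Icc 0 T) ≤ volume.real (Ico 0 δ) :=
              measureReal_mono (fun s hs => ⟨hs.2.1, hs.1⟩) (by simp)
          _ = δ := by simp [hδ]

/-- Key `I₁` estimate in the memory-to-memoryless limit: the memory convolution
differs from the instantaneous spatial convolution by at most
`(2M + LT)‖μ‖_{L¹} δ` in `L¹((0,T)×ℝ)`. -/
theorem memory_to_memoryless_I1_estimate
    (u : ℝ → ℝ → ℝ) (μ Γδ : ℝ → ℝ) (T M L Kμ δ : ℝ)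
    (hT : 0 < T) (hδ : 0 < δ)
    (hunn : ∀ t x, 0 ≤ u t x)
    (huint : ∀ t, Integrable (u t))
    (humass : ∀ t, t ∈ Icc 0 T → ∫ ξ, u t ξ ≤ M)
    (huLip : ∀ t₁ ∈ Icc (0:ℝ) T, ∀ t₂ ∈ Icc (0:ℝ) T,
        ∫ ξ, |u t₁ ξ - u t₂ ξ| ≤ L * |t₁ - t₂|)
    (hμnn : ∀ x, 0 ≤ μ x) (hμint : Integrable μ)
    (hμnorm : ∫ x, μ x ≤ Kμ)
    (hΓnn : ∀ t, 0 ≤ Γδ t)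
    (hΓsupp : ∀ t, t ∉ Icc (0:ℝ) δ → Γδ t = 0)
    (hΓint : IntegrableOn Γδ (Icc 0 δ))
    (hΓmass : ∫ t in Icc (0:ℝ) δ, Γδ t = 1) :
    ∫ t in Icc (0:ℝ) T, ∫ x,
        |(∫ τ in Ioc (0:ℝ) t, ∫ ξ, u τ ξ * μ (x - ξ) * Γδ (t - τ)) -
          ∫ ξ, u t ξ * μ (x - ξ)|
      ≤ (2 * M + L * T) * Kμ * δ := by
  have hK : 0 ≤ Kμ := (integral_nonneg hμnn).trans hμnorm
  have hL : 0 ≤ L := by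
    have h := huLip 0 ⟨le_rfl, hT.le⟩ T ⟨hT.le, le_rfl⟩
    rw [zero_sub, abs_neg, abs_of_pos hT] at h
    exact nonneg_of_mul_nonneg_left ((integral_nonneg fun _ => abs_nonneg _).trans h) hT
  have hμabs : ∫ x, |μ x| = ∫ x, μ x := by simp_rw [abs_of_nonneg (hμnn _)]
  set f : ℝ → ℝ → ℝ := fun τ x => ∫ ξ, u τ ξ * μ (x - ξ)
  obtain ⟨v, hv, hvu⟩ := exists_stronglyMeasurable_uncurry_ae_eq_of_integral_abs_sub_le huint huLip
  have hf : AEStronglyMeasurable (uncurry f) ((volume.restrict (Icc 0 T)).prod volume) :=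
    aestronglyMeasurable_integral_mul_comp_sub hv
      ((ae_restrict_iff' measurableSet_Icc).2 (ae_of_all _ hvu)) hμint.1
  have hf_int : ∀ τ ∈ Icc 0 T, Integrable (f τ) := fun τ _ =>
    integrable_integral_mul_comp_sub (huint τ) hμint
  have hf_bdd : ∀ τ ∈ Icc 0 T, ∫ x, |f τ x| ≤ M * Kμ := fun τ hτ => by
    refine (integral_abs_integral_mul_comp_sub_le (huint τ) hμint).trans ?_
    rw [hμabs]
    simp_rw [abs_of_nonneg (hunn τ _)]
    exact mul_le_mul (humass τ hτ) hμnorm (integral_nonneg hμnn)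
      ((integral_nonneg (hunn τ)).trans (humass τ hτ))
  have hf_lip : ∀ τ ∈ Icc 0 T, ∀ s ∈ Icc 0 T, ∫ x, |f τ x - f s x| ≤ L * Kμ * |τ - s| :=
    fun τ hτ s hs => by
      refine (integral_abs_sub_integral_mul_comp_sub_le (huint τ) (huint s) hμint).trans ?_
      rw [hμabs, mul_right_comm]
      exact mul_le_mul (huLip τ hτ s hs) hμnorm (integral_nonneg hμnn) (by positivity)
  have hΓ : IsMemoryKernel Γδ δ := ⟨hΓnn, hΓsupp, hΓint, hΓmass⟩
  simp_rw [integral_mul_const]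
  refine (setIntegral_Icc_le_of_le_of_le hT.le hδ.le (by positivity)
    (fun t _ => integral_nonneg fun _ => abs_nonneg _)
    (fun t ht => integral_abs_memory_sub_le_two_mul hf hf_int hf_bdd hΓ ht)
    (fun t ht hδt => integral_abs_memory_sub_le_mul_of_le hf hf_int hf_bdd hf_lip
      (by positivity) hΓ ht hδt)).trans_eq (by ring)
end
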